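/- arXiv:math/0006008 — 2 statements merged into one kernel-verified Lean document; each statement's English description precedes it below -/
import Mathlib

section
/- Let n, k be natural numbers, let G be a symmetric n×n real matrix, and let p : Fin (k+1) → (Fin n → ℝ) be a (k+1)-tuple of points of ℝⁿ. Define V(p) to be the determinant of the k×k matrix whose (i,j) entry is (p (i+1) − p 0) ⬝ᵥ G.mulVec (p (j+1) − p 0) (the Gram-type determinant of the edge vectors based at p 0, with respect to the bilinear form given by G). Then V is symmetric in the k+1 points: for every permutation σ of Fin (k+1), V(p ∘ σ) = V(p). -/
open Matrix

/-- The `G`-Gram determinant of the `k+1` points `p`, based at `p 0`. -/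
def gramDet (n k : ℕ) (G : Matrix (Fin n) (Fin n) ℝ)
    (p : Fin (k + 1) → (Fin n → ℝ)) : ℝ :=
  Matrix.det (Matrix.of fun i j : Fin k =>
    (p i.succ - p 0) ⬝ᵥ G.mulVec (p j.succ - p 0))

namespace GramAux

variable {n k : ℕ}

/-- Indicator vectors: `v i` is the coordinate vector of the `i`-th point relative to the base. -/
def v (i : Fin (k + 1)) : Fin k → ℝ := fun l => if i = l.succ then 1 else 0

/-- The change-of-edge-basis matrix corresponding to a permutation of the points. -/
def M (σ : Equiv.Perm (Fin (k + 1))) : Matrix (Fin k) (Fin k) ℝ :=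
  Matrix.of fun l j => v (σ j.succ) l - v (σ 0) l

lemma keysum (g : Fin (k + 1) → ℝ) (h0 : g 0 = 0) (i : Fin (k + 1)) :
    ∑ l, g l.succ * v i l = g i := by
  induction i using Fin.cases with
  | zero => simp [v, h0, (Fin.succ_ne_zero _).symm]
  | succ s =>
    simp [v, Fin.succ_inj, mul_ite, mul_one, mul_zero, Finset.sum_ite_eq]

lemma keysum' (g : Fin (k + 1) → ℝ) (h0 : g 0 = 0) (σ : Equiv.Perm (Fin (k + 1)))
    (i j : Fin (k + 1)) :
    ∑ l, g l.succ * (v i l - v j l) = g i - g j := by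
  simp only [mul_sub, Finset.sum_sub_distrib]
  rw [keysum g h0 i, keysum g h0 j]

lemma M_mul (σ τ : Equiv.Perm (Fin (k + 1))) : M σ * M τ = M (σ * τ) := by
  ext l j
  have h0 : (fun i => v (σ i) l - v (σ 0) l) 0 = 0 := by simp
  have := keysum' (fun i => v (σ i) l - v (σ 0) l) h0 σ (τ j.succ) (τ 0)
  simp only [Matrix.mul_apply, M, Matrix.of_apply]
  rw [this]
  simp [Equiv.Perm.mul_apply]

lemma M_one : M (1 : Equiv.Perm (Fin (k + 1))) = 1 := by
  ext l j
  simp [M, v, Matrix.one_apply, Fin.succ_inj, (Fin.succ_ne_zero _).symm, eq_comm]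

lemma det_M_sq (σ : Equiv.Perm (Fin (k + 1))) : (M σ).det ^ 2 = 1 := by
  refine Equiv.Perm.swap_induction_on σ ?_ ?_
  · simp [M_one]
  · intro f x y hxy ih
    have hswap : (M (Equiv.swap x y)).det ^ 2 = 1 := by
      have : (M (Equiv.swap x y)).det * (M (Equiv.swap x y)).det = 1 := by
        rw [← Matrix.det_mul, M_mul, Equiv.swap_mul_self, M_one, Matrix.det_one]
      rw [sq]; exact this
    rw [← M_mul, Matrix.det_mul, mul_pow, hswap, ih, mul_one]

/-- The edge matrix. -/
def E (p : Fin (k + 1) → (Fin n → ℝ)) : Matrix (Fin n) (Fin k) ℝ :=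
  Matrix.of fun x l => p l.succ x - p 0 x

lemma gram_eq (G : Matrix (Fin n) (Fin n) ℝ) (p : Fin (k + 1) → (Fin n → ℝ)) :
    gramDet n k G p = ((E p)ᵀ * G * (E p)).det := by
  unfold gramDet
  congr 1
  ext i j
  simp only [Matrix.of_apply, Matrix.mul_apply, Matrix.transpose_apply, E,
    dotProduct, Matrix.mulVec, Pi.sub_apply, Finset.sum_mul, Finset.mul_sum]
  rw [Finset.sum_comm]
  refine Finset.sum_congr rfl fun y _ => Finset.sum_congr rfl fun x _ => ?_
  ring

lemma E_comp (p : Fin (k + 1) → (Fin n → ℝ)) (σ : Equiv.Perm (Fin (k + 1))) :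
    E (p ∘ σ) = E p * M σ := by
  ext x j
  have h0 : (fun i => p i x - p 0 x) 0 = 0 := by simp
  have := keysum' (fun i => p i x - p 0 x) h0 σ (σ j.succ) (σ 0)
  simp only [Matrix.mul_apply, M, E, Matrix.of_apply]
  rw [this]
  simp [Function.comp]

end GramAux

open GramAux in
theorem gramDet_perm_invariant (n k : ℕ) (G : Matrix (Fin n) (Fin n) ℝ)
    (hG : G.IsSymm) (p : Fin (k + 1) → (Fin n → ℝ)) (σ : Equiv.Perm (Fin (k + 1))) :
    gramDet n k G (p ∘ σ) = gramDet n k G p := by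
  rw [gram_eq, gram_eq, E_comp]
  rw [Matrix.transpose_mul]
  have : (M σ)ᵀ * (E p)ᵀ * G * (E p * M σ)
      = (M σ)ᵀ * ((E p)ᵀ * G * E p) * M σ := by
    simp only [Matrix.mul_assoc]
  rw [this, Matrix.det_mul, Matrix.det_mul, Matrix.det_transpose]
  have h := det_M_sq (k := k) σ
  linear_combination ((E p)ᵀ * G * E p).det * h
end

section
/- Let E be a real inner product space, let k be a natural number, and let p : Fin (k+1) → E be a (k+1)-tuple of points of E. Define W(p) to be the determinant of the k×k matrix whose (i,j) entry is ⟪p (i+1) − p 0, p (j+1) − p 0⟫. Then W is symmetric in the k+1 points: for every permutation σ of Fin (k+1), W(p ∘ σ) = W(p). -/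
/-!
Writing `vᵢ = p (i+1) - p 0`, the based Gram matrix is `gram v`. A permutation fixing the base
point only permutes the `vᵢ`, which conjugates the Gram matrix by a permutation matrix. Swapping
the base point with `p (t+1)` replaces `v` by `S v` for `S = 1 - (𝟙 + eₜ) eₜᵀ` (`𝟙` the all-ones
vector), and `gram (S v) = S · gram v · Sᵀ` has determinant `det S ^ 2 · det (gram v)` with
`det S = -1`. Every permutation of `Fin (k + 1)` is such a swap after a permutation fixing `0`.
-/

open RealInnerProductSpace Matrix

theorem Matrix.gram_comp {E m n 𝕜 : Type*} [Inner 𝕜 E] (v : n → E) (f : m → n) :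
    gram 𝕜 (v ∘ f) = (gram 𝕜 v).submatrix f f :=
  rfl

theorem Matrix.det_one_sub_vecMulVec {n R : Type*} [Fintype n] [DecidableEq n] [CommRing R]
    (u v : n → R) : (1 - vecMulVec u v).det = 1 - v ⬝ᵥ u := by
  rw [vecMulVec_eq Unit, det_one_sub_mul_comm, det_unique, Matrix.sub_apply, one_apply_eq,
    replicateRow_mul_replicateCol_apply]

def edgeVectors {G : Type*} [Sub G] {k : ℕ} (p : Fin (k + 1) → G) (i : Fin k) : G :=
  p i.succ - p 0

theorem edgeVectors_comp_decomposeFin_symm {G : Type*} [Sub G] {k : ℕ} (p : Fin (k + 1) → G)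
    (a : Fin (k + 1)) (e : Equiv.Perm (Fin k)) :
    edgeVectors (p ∘ Equiv.Perm.decomposeFin.symm (a, e)) =
      edgeVectors (p ∘ Equiv.swap 0 a) ∘ e := by
  ext i
  simp [edgeVectors, Equiv.Perm.decomposeFin_symm_apply_succ,
    Equiv.Perm.decomposeFin_symm_apply_zero]

-- Based at `p (t+1)`, the edge to `p 0` is `-vₜ` and the edge to `p (i+1)`, `i ≠ t`, is `vᵢ - vₜ`.
theorem edgeVectors_comp_swap_zero_succ {R V : Type*} [CommRing R] [AddCommGroup V] [Module R V]
    {k : ℕ} (p : Fin (k + 1) → V) (t : Fin k) :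
    edgeVectors (p ∘ Equiv.swap 0 t.succ) = fun i =>
      ∑ l, (1 - vecMulVec (1 + Pi.single t 1) (Pi.single t 1) : Matrix (Fin k) (Fin k) R) i l •
        edgeVectors p l := by
  ext i
  simp only [Matrix.sub_apply, sub_smul, Finset.sum_sub_distrib, one_apply, ite_smul, one_smul,
    zero_smul, Finset.sum_ite_eq, Finset.mem_univ, if_true, vecMulVec_apply, Pi.single_apply,
    mul_ite, mul_one, mul_zero, Finset.sum_ite_eq']
  rcases eq_or_ne i t with rfl | hi
  · simp only [edgeVectors, Function.comp_apply, Equiv.swap_apply_right, Equiv.swap_apply_left,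
      Pi.add_apply, Pi.one_apply, Pi.single_eq_same]
    module
  · simp [edgeVectors, hi, Equiv.swap_apply_of_ne_of_ne]

section RealGram

variable {E : Type*} [NormedAddCommGroup E] [InnerProductSpace ℝ E]

theorem Matrix.gram_sum_smul {m n : Type*} [Fintype n] (A : Matrix m n ℝ) (v : n → E) :
    gram ℝ (fun i => ∑ l, A i l • v l) = A * gram ℝ v * Aᵀ := by
  ext i j
  simp only [gram_apply, mul_apply, transpose_apply, sum_inner, inner_sum,
    real_inner_smul_left, real_inner_smul_right, Finset.sum_mul]
  refine Finset.sum_congr rfl fun _ _ => Finset.sum_congr rfl fun _ _ => ?_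
  ring

theorem Matrix.det_gram_sum_smul {n : Type*} [Fintype n] [DecidableEq n] (A : Matrix n n ℝ)
    (v : n → E) : (gram ℝ (fun i => ∑ l, A i l • v l)).det = A.det ^ 2 * (gram ℝ v).det := by
  rw [gram_sum_smul, det_mul, det_mul, det_transpose]
  ring

theorem det_gram_edgeVectors_comp_swap_zero {k : ℕ} (p : Fin (k + 1) → E) (a : Fin (k + 1)) :
    (gram ℝ (edgeVectors (p ∘ Equiv.swap 0 a))).det = (gram ℝ (edgeVectors p)).det := by
  rcases Fin.eq_zero_or_eq_succ a with rfl | ⟨t, rfl⟩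
  · simp
  · rw [edgeVectors_comp_swap_zero_succ (R := ℝ), det_gram_sum_smul, det_one_sub_vecMulVec]
    simp

end RealGram

theorem based_gram_det_perm_invariant {E : Type*} [NormedAddCommGroup E]
    [InnerProductSpace ℝ E] (k : ℕ) (p : Fin (k + 1) → E)
    (σ : Equiv.Perm (Fin (k + 1))) :
    Matrix.det (Matrix.of fun i j : Fin k =>
        ⟪(p ∘ σ) i.succ - (p ∘ σ) 0, (p ∘ σ) j.succ - (p ∘ σ) 0⟫) =
      Matrix.det (Matrix.of fun i j : Fin k =>
        ⟪p i.succ - p 0, p j.succ - p 0⟫) := by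
  change (gram ℝ (edgeVectors (p ∘ σ))).det = (gram ℝ (edgeVectors p)).det
  obtain ⟨⟨a, e⟩, rfl⟩ := Equiv.Perm.decomposeFin.symm.surjective σ
  rw [edgeVectors_comp_decomposeFin_symm, gram_comp, det_submatrix_equiv_self,
    det_gram_edgeVectors_comp_swap_zero]
end
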